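/- arXiv:1506.07065 — 3 statements merged into one kernel-verified Lean document; each statement's English description precedes it below -/
import Mathlib

section
/- Let M be column-stochastic with invariant vector u (M.mulVec u = u, ∑ u i = 1), m with zero column sums, and ε such that M + ε·m is column-stochastic and 1 - ε·Z*m is invertible, where Z = (1 - M + M∞)⁻¹. Then v := (1 - ε·Z*m)⁻¹.mulVec u satisfies (M + ε·m).mulVec v = v and ∑ i, v i = 1. -/
open scoped BigOperators

/-- If `M + ε • m` is column-stochastic and `1 - ε • Z * m` is invertible, with
`Z = (1 - M + M∞)⁻¹` the fundamental matrix, then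
`v := (1 - ε • Z * m)⁻¹.mulVec u` is an invariant probability vector of `M + ε • m`:
`(M + ε • m).mulVec v = v` and `∑ i, v i = 1`. -/
theorem stmt_12 {N : ℕ} (M m : Matrix (Fin N) (Fin N) ℝ)
    (hMpos : ∀ i j, 0 ≤ M i j) (hMcol : ∀ j, ∑ i, M i j = 1)
    (hmcol : ∀ j, ∑ i, m i j = 0)
    (u : Fin N → ℝ) (hu : M.mulVec u = u) (husum : ∑ i, u i = 1)
    (Minf : Matrix (Fin N) (Fin N) ℝ) (hMinf : ∀ i j, Minf i j = u i)
    (hfund : IsUnit (1 - M + Minf))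
    (Z : Matrix (Fin N) (Fin N) ℝ) (hZ : Z = (1 - M + Minf)⁻¹)
    (ε : ℝ)
    (hstoch : (∀ i j, 0 ≤ (M + ε • m) i j) ∧ ∀ j, ∑ i, (M + ε • m) i j = 1)
    (hinv : IsUnit (1 - ε • (Z * m)))
    (v : Fin N → ℝ) (hv : v = (1 - ε • (Z * m))⁻¹.mulVec u) :
    (M + ε • m).mulVec v = v ∧ ∑ i, v i = 1 := by
  set A : Matrix (Fin N) (Fin N) ℝ := 1 - M + Minf with hA
  set B : Matrix (Fin N) (Fin N) ℝ := 1 - ε • (Z * m) with hB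
  have hAZ : A * Z = 1 := by
    rw [hZ]
    exact Matrix.mul_nonsing_inv _ (A.isUnit_iff_isUnit_det.mp hfund)
  have hBB : B * B⁻¹ = 1 :=
    Matrix.mul_nonsing_inv _ (B.isUnit_iff_isUnit_det.mp hinv)
  -- A * B = A - ε • m
  have hAB : A * B = A - ε • m := by
    rw [hB, Matrix.mul_sub, Matrix.mul_one, Matrix.mul_smul, ← Matrix.mul_assoc, hAZ,
      Matrix.one_mul]
  have hABinv : (A - ε • m) * B⁻¹ = A := by
    rw [← hAB, Matrix.mul_assoc, hBB, Matrix.mul_one]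
  -- A u = u
  have hMinfu : Minf.mulVec u = u := by
    funext i
    simp only [Matrix.mulVec, dotProduct, hMinf, ← Finset.mul_sum, husum, mul_one]
  have hAu : A.mulVec u = u := by
    rw [hA, Matrix.add_mulVec, Matrix.sub_mulVec, Matrix.one_mulVec, hu, hMinfu]
    abel
  -- all-ones row vector
  set o : Fin N → ℝ := fun _ => (1 : ℝ) with ho
  have hoA : Matrix.vecMul o A = o := by
    funext j
    simp only [Matrix.vecMul, dotProduct, ho, one_mul, hA, Matrix.add_apply,
      Matrix.sub_apply, hMinf, Finset.sum_add_distrib, Finset.sum_sub_distrib, hMcol, husum]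
    simp [Matrix.one_apply]
  have hoZ : Matrix.vecMul o Z = o := by
    calc Matrix.vecMul o Z = Matrix.vecMul (Matrix.vecMul o A) Z := by rw [hoA]
    _ = Matrix.vecMul o (A * Z) := by rw [Matrix.vecMul_vecMul]
    _ = o := by rw [hAZ, Matrix.vecMul_one]
  have hom : Matrix.vecMul o m = 0 := by
    funext j
    simp only [Matrix.vecMul, dotProduct, ho, one_mul, hmcol, Pi.zero_apply]
  have hoB : Matrix.vecMul o B = o := by
    have hsm : Matrix.vecMul o (ε • (Z * m)) = ε • Matrix.vecMul o (Z * m) := by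
      funext j
      simp [Matrix.vecMul, dotProduct, Finset.mul_sum, mul_left_comm]
    rw [hB, Matrix.vecMul_sub, Matrix.vecMul_one, hsm, ← Matrix.vecMul_vecMul,
      hoZ, hom, smul_zero, sub_zero]
  have hoBinv : Matrix.vecMul o B⁻¹ = o := by
    calc Matrix.vecMul o B⁻¹ = Matrix.vecMul (Matrix.vecMul o B) B⁻¹ := by rw [hoB]
    _ = Matrix.vecMul o (B * B⁻¹) := by rw [Matrix.vecMul_vecMul]
    _ = o := by rw [hBB, Matrix.vecMul_one]
  have hsum : ∑ i, v i = 1 := by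
    have : ∑ i, v i = dotProduct o v := by
      simp [dotProduct, ho]
    rw [this, hv, Matrix.dotProduct_mulVec, hoBinv]
    simpa [dotProduct, ho] using husum
  refine ⟨?_, hsum⟩
  -- (A - ε•m) v = u
  have h1 : (A - ε • m).mulVec v = u := by
    rw [hv, Matrix.mulVec_mulVec, hABinv, hAu]
  have hMinfv : Minf.mulVec v = u := by
    funext i
    simp only [Matrix.mulVec, dotProduct, hMinf, ← Finset.mul_sum, hsum, mul_one]
  have hsplit : M + ε • m = 1 + Minf - (A - ε • m) := by
    rw [hA]; abel
  rw [hsplit, Matrix.sub_mulVec, Matrix.add_mulVec, Matrix.one_mulVec, hMinfv, h1]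
  abel
end

section
/- For a column-stochastic matrix M with ergodicity coefficient τ(M) = (1/2)·max_{i,j} ‖M.mulVec(eᵢ - eⱼ)‖₁, every vector z with ∑ i, z i = 0 satisfies ‖M.mulVec z‖₁ ≤ τ(M) · ‖z‖₁. -/
open scoped BigOperators

/-- For a column-stochastic matrix `M` with ergodicity coefficient
`τ(M) = (1/2) · max_{i,j} ‖M.mulVec (eᵢ - eⱼ)‖₁`, every vector `z` with zero
component sum satisfies `‖M.mulVec z‖₁ ≤ τ(M) · ‖z‖₁`. -/
theorem stmt_15 {N : ℕ} (hN : 1 ≤ N) (M : Matrix (Fin N) (Fin N) ℝ)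
    (hMpos : ∀ i j, 0 ≤ M i j) (hMcol : ∀ j, ∑ i, M i j = 1)
    (τ : ℝ)
    (hτ : τ = (1 / 2) * sSup {t : ℝ | ∃ i j : Fin N,
      t = ∑ k, |M.mulVec (Pi.single i 1 - Pi.single j 1) k|})
    (z : Fin N → ℝ) (hz : ∑ i, z i = 0) :
    ∑ k, |M.mulVec z k| ≤ τ * ∑ k, |z k| := by
  classical
  set f : Fin N → Fin N → ℝ :=
    fun i j => ∑ k, |M.mulVec (Pi.single i 1 - Pi.single j 1) k| with hf
  have hSet : {t : ℝ | ∃ i j : Fin N,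
      t = ∑ k, |M.mulVec (Pi.single i 1 - Pi.single j 1) k|}
      = Set.range (fun q : Fin N × Fin N => f q.1 q.2) := by
    ext t
    constructor
    · rintro ⟨i, j, rfl⟩; exact ⟨(i, j), rfl⟩
    · rintro ⟨⟨i, j⟩, rfl⟩; exact ⟨i, j, rfl⟩
  have hfle : ∀ i j, f i j ≤ 2 * τ := by
    intro i j
    have h1 : f i j ≤ sSup (Set.range (fun q : Fin N × Fin N => f q.1 q.2)) :=
      le_csSup (Set.finite_range _).bddAbove ⟨(i, j), rfl⟩
    rw [hτ, hSet]
    linarith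
  set p : Fin N → ℝ := fun i => max (z i) 0 with hp
  set n : Fin N → ℝ := fun i => max (-z i) 0 with hn
  have hpnn : ∀ i, 0 ≤ p i := fun i => le_max_right _ _
  have hnnn : ∀ i, 0 ≤ n i := fun i => le_max_right _ _
  have hzpn : ∀ i, z i = p i - n i := by
    intro i
    rcases le_total 0 (z i) with h | h
    · simp [hp, hn, max_eq_left h, max_eq_right (neg_nonpos.mpr h)]
    · simp [hp, hn, max_eq_right h, max_eq_left (neg_nonneg.mpr h)]
  have habs : ∀ i, |z i| = p i + n i := by
    intro i
    rcases le_total 0 (z i) with h | h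
    · simp [hp, hn, abs_of_nonneg h, max_eq_left h, max_eq_right (neg_nonpos.mpr h)]
    · simp [hp, hn, abs_of_nonpos h, max_eq_right h, max_eq_left (neg_nonneg.mpr h)]
  set s : ℝ := ∑ i, p i with hs
  have hsn : ∑ i, n i = s := by
    have h := hz
    simp only [hzpn, Finset.sum_sub_distrib] at h
    linarith
  have hnorm : ∑ i, |z i| = 2 * s := by
    simp only [habs, Finset.sum_add_distrib, hsn]; ring
  have hs0 : 0 ≤ s := Finset.sum_nonneg fun i _ => hpnn i
  rcases eq_or_lt_of_le hs0 with hseq | hspos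
  · -- s = 0 : z = 0
    have hz0 : ∀ i, z i = 0 := by
      intro i
      have h1 : ∀ i ∈ Finset.univ, p i = 0 :=
        (Finset.sum_eq_zero_iff_of_nonneg fun i _ => hpnn i).mp hseq.symm
      have h2 : ∀ i ∈ Finset.univ, n i = 0 :=
        (Finset.sum_eq_zero_iff_of_nonneg fun i _ => hnnn i).mp (hsn.trans hseq.symm)
      rw [hzpn i, h1 i (Finset.mem_univ i), h2 i (Finset.mem_univ i)]; ring
    have hzero : ∀ k, M.mulVec z k = 0 := by
      intro k
      simp [Matrix.mulVec, dotProduct, hz0]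
    simp [hzero, hnorm, ← hseq]
  · -- s > 0
    have key : ∀ l, (∑ i, ∑ j, p i * n j * ((Pi.single i (1:ℝ) - Pi.single j 1 : Fin N → ℝ) l))
        = s * z l := by
      intro l
      have e1 : ∑ i, p i * ((Pi.single i (1:ℝ) : Fin N → ℝ) l) = p l := by
        simp [Pi.single_apply]
      have e2 : ∑ j, n j * ((Pi.single j (1:ℝ) : Fin N → ℝ) l) = n l := by
        simp [Pi.single_apply]
      have expand : ∀ i j : Fin N, p i * n j * ((Pi.single i (1:ℝ) - Pi.single j 1 : Fin N → ℝ) l)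
          = (p i * (Pi.single i (1:ℝ) : Fin N → ℝ) l) * n j - p i * (n j * (Pi.single j (1:ℝ) : Fin N → ℝ) l) := by
        intro i j; simp only [Pi.sub_apply]; ring
      simp_rw [expand, Finset.sum_sub_distrib, ← Finset.mul_sum, ← Finset.sum_mul]
      rw [e1, e2, hsn, ← hs, hzpn l]
      ring
    have hMz : ∀ k, (∑ i, ∑ j, p i * n j * M.mulVec (Pi.single i 1 - Pi.single j 1) k)
        = s * M.mulVec z k := by
      intro k
      simp only [Matrix.mulVec, dotProduct]
      have step1 : ∀ i j : Fin N,
          p i * n j * (∑ l, M k l * ((Pi.single i (1:ℝ) - Pi.single j 1 : Fin N → ℝ) l))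
          = ∑ l, M k l * (p i * n j * ((Pi.single i (1:ℝ) - Pi.single j 1 : Fin N → ℝ) l)) := by
        intro i j
        rw [Finset.mul_sum]
        exact Finset.sum_congr rfl fun l _ => by ring
      simp_rw [step1]
      have sw1 : (∑ i, ∑ j, ∑ l, M k l * (p i * n j * ((Pi.single i (1:ℝ) - Pi.single j 1 : Fin N → ℝ) l)))
          = ∑ l, ∑ i, ∑ j, M k l * (p i * n j * ((Pi.single i (1:ℝ) - Pi.single j 1 : Fin N → ℝ) l)) := by
        rw [show (∑ i, ∑ j, ∑ l, M k l * (p i * n j * ((Pi.single i (1:ℝ) - Pi.single j 1 : Fin N → ℝ) l)))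
            = ∑ i, ∑ l, ∑ j, M k l * (p i * n j * ((Pi.single i (1:ℝ) - Pi.single j 1 : Fin N → ℝ) l))
          from Finset.sum_congr rfl fun i _ => Finset.sum_comm]
        exact Finset.sum_comm
      rw [sw1]
      have sw2 : ∀ l : Fin N,
          (∑ i, ∑ j, M k l * (p i * n j * ((Pi.single i (1:ℝ) - Pi.single j 1 : Fin N → ℝ) l)))
          = M k l * (s * z l) := by
        intro l
        rw [← key l, Finset.mul_sum]
        exact Finset.sum_congr rfl fun i _ => (Finset.mul_sum _ _ _).symm
      simp_rw [sw2]
      rw [Finset.mul_sum]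
      exact Finset.sum_congr rfl fun l _ => by ring
    have bound : ∀ k, s * |M.mulVec z k|
        ≤ ∑ i, ∑ j, p i * n j * |M.mulVec (Pi.single i 1 - Pi.single j 1) k| := by
      intro k
      have h1 : s * |M.mulVec z k| = |∑ i, ∑ j, p i * n j * M.mulVec (Pi.single i 1 - Pi.single j 1) k| := by
        rw [hMz k, abs_mul, abs_of_pos hspos]
      rw [h1]
      refine (Finset.abs_sum_le_sum_abs _ _).trans ?_
      refine Finset.sum_le_sum fun i _ => (Finset.abs_sum_le_sum_abs _ _).trans ?_
      refine Finset.sum_le_sum fun j _ => ?_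
      rw [abs_mul, abs_mul, abs_of_nonneg (hpnn i), abs_of_nonneg (hnnn j)]
    have main : s * ∑ k, |M.mulVec z k| ≤ s * (τ * ∑ k, |z k|) := by
      calc s * ∑ k, |M.mulVec z k| = ∑ k, s * |M.mulVec z k| := Finset.mul_sum _ _ _
        _ ≤ ∑ k, ∑ i, ∑ j, p i * n j * |M.mulVec (Pi.single i 1 - Pi.single j 1) k| :=
            Finset.sum_le_sum fun k _ => bound k
        _ = ∑ i, ∑ j, p i * n j * f i j := by
            rw [Finset.sum_comm]
            refine Finset.sum_congr rfl fun i _ => ?_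
            rw [Finset.sum_comm]
            exact Finset.sum_congr rfl fun j _ => (Finset.mul_sum _ _ _).symm
        _ ≤ ∑ i, ∑ j, p i * n j * (2 * τ) := by
            refine Finset.sum_le_sum fun i _ => Finset.sum_le_sum fun j _ => ?_
            exact mul_le_mul_of_nonneg_left (hfle i j) (mul_nonneg (hpnn i) (hnnn j))
        _ = s * (s * (2 * τ)) := by
            have inner : ∀ i : Fin N, ∑ j, p i * n j * (2 * τ) = p i * (s * (2 * τ)) := by
              intro i
              rw [← hsn, Finset.sum_mul, Finset.mul_sum]
              exact Finset.sum_congr rfl fun j _ => by ring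
            simp_rw [inner]
            rw [← Finset.sum_mul, ← hs]
        _ = s * (τ * ∑ k, |z k|) := by rw [hnorm]; ring
    exact le_of_mul_le_mul_left main hspos
end

section
/- Let M be column-stochastic with τ(M) < 1 (ergodicity coefficient), and let u, v be invariant probability vectors of M and M + ε·m respectively (both nonnegative, summing to 1), where m has zero column sums. Then ‖v - u‖₁ ≤ |ε|·‖m‖₁ / (1 - τ(M)), where ‖m‖₁ is the maximum column ℓ¹-norm. -/
open scoped BigOperators

lemma contraction_aux {N : ℕ} (M : Matrix (Fin N) (Fin N) ℝ) (τ2 : ℝ)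
    (hbound : ∀ i j : Fin N, ∑ k, |M.mulVec (Pi.single i 1 - Pi.single j 1) k| ≤ τ2)
    (w : Fin N → ℝ) (hw : ∑ i, w i = 0) :
    ∑ k, |M.mulVec w k| ≤ (τ2 / 2) * ∑ i, |w i| := by
  classical
  set wp : Fin N → ℝ := fun i => max (w i) 0 with hwp
  set wm : Fin N → ℝ := fun i => max (-w i) 0 with hwm
  have hwpm : w = wp - wm := by
    funext i; simp [hwp, hwm, max_zero_sub_max_neg_zero_eq_self]
  have habs : ∀ i, |w i| = wp i + wm i := by
    intro i
    rcases le_total 0 (w i) with h | h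
    · simp [hwp, hwm, abs_of_nonneg h, max_eq_left h, max_eq_right (by linarith : -w i ≤ 0)]
    · simp [hwp, hwm, abs_of_nonpos h, max_eq_right h, max_eq_left (by linarith : 0 ≤ -w i)]
  have hwp0 : ∀ i, 0 ≤ wp i := fun i => le_max_right _ _
  have hwm0 : ∀ i, 0 ≤ wm i := fun i => le_max_right _ _
  set s : ℝ := ∑ i, wp i with hs
  have hsm : ∑ i, wm i = s := by
    have := hw
    rw [hwpm] at this
    simp only [Pi.sub_apply, Finset.sum_sub_distrib] at this
    linarith
  have hsumabs : ∑ i, |w i| = 2 * s := by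
    simp only [habs, Finset.sum_add_distrib, hsm, hs]; ring
  have hs0 : 0 ≤ s := Finset.sum_nonneg fun i _ => hwp0 i
  rcases eq_or_lt_of_le hs0 with hseq | hspos
  · -- s = 0 hence w = 0
    have hw0 : ∀ i, w i = 0 := by
      intro i
      have h1 : wp i = 0 := by
        have := (Finset.sum_eq_zero_iff_of_nonneg (fun i _ => hwp0 i)).1 hseq.symm i (Finset.mem_univ i)
        exact this
      have h2 : wm i = 0 := by
        have := (Finset.sum_eq_zero_iff_of_nonneg (fun i _ => hwm0 i)).1 (hsm.trans hseq.symm) i (Finset.mem_univ i)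
        exact this
      rw [hwpm]; simp [h1, h2]
    have : w = 0 := funext hw0
    rw [this]
    simp [Matrix.mulVec_zero]
  · -- s > 0
    have hDij : ∀ i j k, M.mulVec (Pi.single i 1 - Pi.single j 1) k = M k i - M k j := by
      intro i j k
      rw [Matrix.mulVec_sub]
      simp [Matrix.mulVec_single]
    have key : ∀ k, s * M.mulVec w k = ∑ i, ∑ j, wp i * wm j * (M k i - M k j) := by
      intro k
      have expand : ∀ i, ∑ j, wp i * wm j * (M k i - M k j)
          = wp i * M k i * s - wp i * ∑ j, wm j * M k j := by
        intro i
        rw [← hsm, Finset.mul_sum, Finset.mul_sum, ← Finset.sum_sub_distrib]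
        apply Finset.sum_congr rfl; intro j _; ring
      rw [Finset.sum_congr rfl (fun i _ => expand i), Finset.sum_sub_distrib]
      rw [hwpm, Matrix.mulVec_sub]
      simp only [Pi.sub_apply, Matrix.mulVec]
      simp only [dotProduct]
      rw [← Finset.sum_mul, ← Finset.sum_mul, mul_sub, Finset.mul_sum, Finset.mul_sum, Finset.sum_mul]
      congr 1
      · apply Finset.sum_congr rfl; intro i _; ring
      · rw [← hs, Finset.mul_sum]
        apply Finset.sum_congr rfl; intro i _; ring
    -- now the estimate
    have hmain : s * ∑ k, |M.mulVec w k| ≤ s * ((τ2 / 2) * ∑ i, |w i|) := by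
      calc s * ∑ k, |M.mulVec w k| = ∑ k, |s * M.mulVec w k| := by
            rw [Finset.mul_sum]
            apply Finset.sum_congr rfl; intro k _
            rw [abs_mul, abs_of_pos hspos]
        _ = ∑ k, |∑ i, ∑ j, wp i * wm j * (M k i - M k j)| := by
            apply Finset.sum_congr rfl; intro k _; rw [key k]
        _ ≤ ∑ k, ∑ i, ∑ j, wp i * wm j * |M k i - M k j| := by
            apply Finset.sum_le_sum; intro k _
            refine (Finset.abs_sum_le_sum_abs _ _).trans ?_
            apply Finset.sum_le_sum; intro i _
            refine (Finset.abs_sum_le_sum_abs _ _).trans ?_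
            apply Finset.sum_le_sum; intro j _
            rw [abs_mul, abs_mul, abs_of_nonneg (hwp0 i), abs_of_nonneg (hwm0 j)]
        _ = ∑ i, ∑ j, wp i * wm j * ∑ k, |M k i - M k j| := by
            rw [Finset.sum_comm]
            apply Finset.sum_congr rfl; intro i _
            rw [Finset.sum_comm]
            apply Finset.sum_congr rfl; intro j _
            rw [Finset.mul_sum]
        _ ≤ ∑ i, ∑ j, wp i * wm j * τ2 := by
            apply Finset.sum_le_sum; intro i _
            apply Finset.sum_le_sum; intro j _
            apply mul_le_mul_of_nonneg_left _ (mul_nonneg (hwp0 i) (hwm0 j))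
            have := hbound i j
            simpa only [hDij] using this
        _ = s * s * τ2 := by
            calc ∑ i, ∑ j, wp i * wm j * τ2 = ∑ i, wp i * (s * τ2) := by
                  apply Finset.sum_congr rfl; intro i _
                  rw [← Finset.sum_mul, ← Finset.mul_sum, hsm]; ring
              _ = s * s * τ2 := by rw [← Finset.sum_mul, ← hs]; ring
        _ = s * ((τ2 / 2) * ∑ i, |w i|) := by rw [hsumabs]; ring
    exact le_of_mul_le_mul_left hmain hspos

/-- Perturbation bound: if `τ(M) < 1` and `u, v` are invariant probability vectors of
`M` and `M + ε • m` respectively, with `m` having zero column sums, then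
`‖v - u‖₁ ≤ |ε| · ‖m‖₁ / (1 - τ(M))`, where `‖m‖₁` is the maximal column `ℓ¹`-norm. -/
theorem stmt_16 {N : ℕ} (M m : Matrix (Fin N) (Fin N) ℝ)
    (hMpos : ∀ i j, 0 ≤ M i j) (hMcol : ∀ j, ∑ i, M i j = 1)
    (hmcol : ∀ j, ∑ i, m i j = 0) (ε : ℝ)
    (hpert : ∀ i j, 0 ≤ (M + ε • m) i j)
    (τ : ℝ)
    (hτ : τ = (1 / 2) * sSup {t : ℝ | ∃ i j : Fin N,
      t = ∑ k, |M.mulVec (Pi.single i 1 - Pi.single j 1) k|})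
    (hτlt : τ < 1)
    (normm : ℝ) (hnormm : normm = sSup {t : ℝ | ∃ j : Fin N, t = ∑ i, |m i j|})
    (u v : Fin N → ℝ)
    (hu : M.mulVec u = u) (hupos : ∀ i, 0 ≤ u i) (husum : ∑ i, u i = 1)
    (hv : (M + ε • m).mulVec v = v) (hvpos : ∀ i, 0 ≤ v i) (hvsum : ∑ i, v i = 1) :
    ∑ i, |v i - u i| ≤ |ε| * normm / (1 - τ) := by
  classical
  rcases Nat.eq_zero_or_pos N with hN | hN
  · subst hN
    have hτ0 : τ = 0 := by
      rw [hτ, show {t : ℝ | ∃ i j : Fin 0,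
          t = ∑ k, |M.mulVec (Pi.single i 1 - Pi.single j 1) k|} = ∅ by
        ext t; simp]
      rw [Real.sSup_empty]; ring
    have hm0 : normm = 0 := by
      rw [hnormm, show {t : ℝ | ∃ j : Fin 0, t = ∑ i, |m i j|} = ∅ by ext t; simp]
      exact Real.sSup_empty
    simp [hτ0, hm0]
  · haveI : NeZero N := ⟨hN.ne'⟩
    -- bounded-above facts
    have hfinτ : ({t : ℝ | ∃ i j : Fin N,
        t = ∑ k, |M.mulVec (Pi.single i 1 - Pi.single j 1) k|}).Finite := by
      have : {t : ℝ | ∃ i j : Fin N,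
          t = ∑ k, |M.mulVec (Pi.single i 1 - Pi.single j 1) k|}
          = Set.range (fun p : Fin N × Fin N =>
            ∑ k, |M.mulVec (Pi.single p.1 1 - Pi.single p.2 1) k|) := by
        ext t
        constructor
        · rintro ⟨i, j, rfl⟩; exact ⟨(i, j), rfl⟩
        · rintro ⟨⟨i, j⟩, rfl⟩; exact ⟨i, j, rfl⟩
      rw [this]; exact Set.finite_range _
    have hfinm : ({t : ℝ | ∃ j : Fin N, t = ∑ i, |m i j|}).Finite := by
      have : {t : ℝ | ∃ j : Fin N, t = ∑ i, |m i j|}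
          = Set.range (fun j : Fin N => ∑ i, |m i j|) := by
        ext t
        constructor
        · rintro ⟨j, rfl⟩; exact ⟨j, rfl⟩
        · rintro ⟨j, rfl⟩; exact ⟨j, rfl⟩
      rw [this]; exact Set.finite_range _
    have hτ2 : ∀ i j : Fin N,
        ∑ k, |M.mulVec (Pi.single i 1 - Pi.single j 1) k| ≤ 2 * τ := by
      intro i j
      have hle := le_csSup hfinτ.bddAbove (show _ ∈ _ from ⟨i, j, rfl⟩)
      rw [hτ]; linarith
    have hmle : ∀ j : Fin N, ∑ i, |m i j| ≤ normm := by
      intro j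
      have := le_csSup hfinm.bddAbove (show _ ∈ _ from ⟨j, rfl⟩)
      rw [hnormm]; exact this
    -- the difference vector
    set w : Fin N → ℝ := fun i => v i - u i with hwdef
    have hwsum : ∑ i, w i = 0 := by
      simp only [hwdef, Finset.sum_sub_distrib, hvsum, husum]; ring
    have hweq : ∀ k, w k = M.mulVec w k + ε * m.mulVec v k := by
      intro k
      have hv' : M.mulVec v k + ε * m.mulVec v k = v k := by
        have := congrFun hv k
        rwa [Matrix.add_mulVec, Matrix.smul_mulVec, Pi.add_apply,
          Pi.smul_apply, smul_eq_mul] at this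
      have hw' : M.mulVec w k = M.mulVec v k - M.mulVec u k := by
        have : w = v - u := by funext i; simp [hwdef]
        rw [this, Matrix.mulVec_sub]; rfl
      have hu' : M.mulVec u k = u k := congrFun hu k
      simp only [hwdef]
      rw [hw', hu']
      linarith
    -- bound on the perturbation term
    have hmv : ∑ k, |m.mulVec v k| ≤ normm := by
      simp only [Matrix.mulVec, dotProduct]
      calc ∑ k, |∑ j, m k j * v j| ≤ ∑ k, ∑ j, |m k j| * v j := by
            apply Finset.sum_le_sum; intro k _
            refine (Finset.abs_sum_le_sum_abs _ _).trans ?_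
            apply Finset.sum_le_sum; intro j _
            rw [abs_mul, abs_of_nonneg (hvpos j)]
        _ = ∑ j, (∑ k, |m k j|) * v j := by
            rw [Finset.sum_comm]
            apply Finset.sum_congr rfl; intro j _
            rw [Finset.sum_mul]
        _ ≤ ∑ j, normm * v j := by
            apply Finset.sum_le_sum; intro j _
            exact mul_le_mul_of_nonneg_right (hmle j) (hvpos j)
        _ = normm := by rw [← Finset.mul_sum, hvsum, mul_one]
    -- contraction
    have hcontr := contraction_aux M (2 * τ) hτ2 w hwsum
    have hkey : ∑ i, |w i| ≤ τ * ∑ i, |w i| + |ε| * normm := by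
      calc ∑ i, |w i| = ∑ i, |M.mulVec w i + ε * m.mulVec v i| := by
            apply Finset.sum_congr rfl; intro i _; rw [← hweq i]
        _ ≤ ∑ i, (|M.mulVec w i| + |ε * m.mulVec v i|) := by
            apply Finset.sum_le_sum; intro i _; exact abs_add_le _ _
        _ = ∑ i, |M.mulVec w i| + |ε| * ∑ i, |m.mulVec v i| := by
            rw [Finset.sum_add_distrib, Finset.mul_sum]
            congr 1
            apply Finset.sum_congr rfl; intro i _; rw [abs_mul]
        _ ≤ τ * ∑ i, |w i| + |ε| * normm := by
            have h1 : ∑ i, |M.mulVec w i| ≤ τ * ∑ i, |w i| := by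
              have : (2 * τ) / 2 = τ := by ring
              rwa [this] at hcontr
            have h2 : |ε| * ∑ i, |m.mulVec v i| ≤ |ε| * normm :=
              mul_le_mul_of_nonneg_left hmv (abs_nonneg ε)
            linarith
    have hgoal : ∑ i, |v i - u i| = ∑ i, |w i| := rfl
    rw [hgoal, le_div_iff₀ (by linarith : (0:ℝ) < 1 - τ)]
    nlinarith [hkey]
end
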